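/- The algebra G₀₇ on ℂ³ with products e₁·e₂ = e₂ and e₃·e₃ = e₃ (other basis products zero) satisfies the δ-Novikov identities for every δ ∈ ℂ, and is neither commutative nor associative. -/

import Mathlib

/-- Multiplication of G₀₇ on ℂ³: e₁e₂ = e₂, e₃e₃ = e₃. -/
noncomputable def mulG07 (x y : Fin 3 → ℂ) : Fin 3 → ℂ :=
  ![0, x 0 * y 1, x 2 * y 2]

noncomputable def eG07 (i : Fin 3) : Fin 3 → ℂ := fun j => if j = i then 1 else 0

/-! Both triple products are symmetric in the pair of factors the δ-Novikov identities swap: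
`(xy)z = x₃y₃z₃ e₃` is symmetric in all three arguments, and `x(yz) = x₁y₁z₂ e₂ + x₃y₃z₃ e₃`
is symmetric in `x` and `y`. Each identity therefore holds term by term, for every `δ`. -/

theorem mulG07_mulG07_left (x y z : Fin 3 → ℂ) :
    mulG07 (mulG07 x y) z = ![0, 0, x 2 * y 2 * z 2] := by
  simp [mulG07, mul_assoc]

theorem mulG07_mulG07_right (x y z : Fin 3 → ℂ) :
    mulG07 x (mulG07 y z) = ![0, x 0 * y 0 * z 1, x 2 * y 2 * z 2] := by
  simp [mulG07, mul_assoc]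

theorem mulG07_left_comm (x y z : Fin 3 → ℂ) :
    mulG07 x (mulG07 y z) = mulG07 y (mulG07 x z) := by
  simp only [mulG07_mulG07_right, mul_comm (x 0), mul_comm (x 2)]

theorem mulG07_mulG07_comm (x y z : Fin 3 → ℂ) :
    mulG07 (mulG07 x y) z = mulG07 (mulG07 y x) z := by
  simp only [mulG07_mulG07_left, mul_comm (x 2)]

theorem mulG07_right_comm (x y z : Fin 3 → ℂ) :
    mulG07 (mulG07 x y) z = mulG07 (mulG07 x z) y := by
  simp only [mulG07_mulG07_left, mul_right_comm (x 2)]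

theorem mulG07_eG07_zero_one : mulG07 (eG07 0) (eG07 1) = eG07 1 := by
  ext j; fin_cases j <;> simp [mulG07, eG07]

theorem mulG07_eG07_one_zero : mulG07 (eG07 1) (eG07 0) = 0 := by
  ext j; fin_cases j <;> simp [mulG07, eG07]

theorem mulG07_eG07_zero_zero : mulG07 (eG07 0) (eG07 0) = 0 := by
  ext j; fin_cases j <;> simp [mulG07, eG07]

theorem mulG07_zero_left (y : Fin 3 → ℂ) : mulG07 0 y = 0 := by
  ext j; fin_cases j <;> simp [mulG07]

theorem eG07_ne_zero (i : Fin 3) : eG07 i ≠ 0 :=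
  fun h => by simpa [eG07] using congrFun h i

/-- G₀₇ is δ-Novikov for every δ, but neither commutative nor associative. -/
theorem stmt_16 :
    (∀ δ : ℂ, ∀ x y z : Fin 3 → ℂ,
      δ • mulG07 (mulG07 x y) z - mulG07 x (mulG07 y z)
        = δ • mulG07 (mulG07 y x) z - mulG07 y (mulG07 x z)) ∧
    (∀ x y z : Fin 3 → ℂ, mulG07 (mulG07 x y) z = mulG07 (mulG07 x z) y) ∧
    mulG07 (eG07 0) (eG07 1) ≠ mulG07 (eG07 1) (eG07 0) ∧
    mulG07 (mulG07 (eG07 0) (eG07 0)) (eG07 1) ≠ mulG07 (eG07 0) (mulG07 (eG07 0) (eG07 1)) := by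
  refine ⟨fun δ x y z => ?_, mulG07_right_comm, ?_, ?_⟩
  · rw [mulG07_mulG07_comm x y, mulG07_left_comm x y]
  · rw [mulG07_eG07_zero_one, mulG07_eG07_one_zero]
    exact eG07_ne_zero 1
  · rw [mulG07_eG07_zero_zero, mulG07_zero_left, mulG07_eG07_zero_one, mulG07_eG07_zero_one]
    exact (eG07_ne_zero 1).symm
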